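/- Let f ∈ L²([0,1]). For every finite signed Borel measure ϱ on [0,1], the supremum over all continuous G : [0,1] → ℝ of ∫ G dϱ − ∫_0^1 ( f(u) G(u) + (1/2) G(u)² ) du equals (1/2) ∫_0^1 (ρ(u) − f(u))² du if ϱ is absolutely continuous with respect to Lebesgue measure with a density ρ ∈ L²([0,1]), and equals +∞ otherwise. -/

import Mathlib

open MeasureTheory Filter ENNReal NNReal
open scoped BoundedContinuousFunction

noncomputable section

/-- Integral of a function against a finite signed measure, via its Jordan decomposition. -/
def sintegral (ϱ : SignedMeasure ℝ) (G : ℝ → ℝ) : ℝ :=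
  (∫ u, G u ∂ϱ.toJordanDecomposition.posPart) - (∫ u, G u ∂ϱ.toJordanDecomposition.negPart)

/-- The functional `G ↦ ∫ G dϱ − ∫_0^1 (f G + G²/2) du` whose supremum over continuous `G`
is the non-equilibrium free energy `W(ϱ)`. -/
def legVal (f : ℝ → ℝ) (ϱ : SignedMeasure ℝ) (G : ℝ → ℝ) : ℝ :=
  sintegral ϱ G - ∫ u in Set.Icc (0:ℝ) 1, (f u * G u + (G u) ^ 2 / 2)

namespace LegAux

abbrev μ01 : Measure ℝ := volume.restrict (Set.Icc (0:ℝ) 1)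

lemma bdd_ae {G : ℝ → ℝ} (hG : Continuous G) : ∃ C, ∀ᵐ x ∂μ01, ‖G x‖ ≤ C := by
  obtain ⟨C, hC⟩ := isCompact_Icc.exists_bound_of_continuousOn hG.continuousOn
  exact ⟨C, (ae_restrict_mem measurableSet_Icc).mono fun x hx => hC x hx⟩

lemma int_mul' {v G : ℝ → ℝ} (hv : Integrable v μ01) (hGm : AEStronglyMeasurable G μ01)
    {C : ℝ} (hC : ∀ᵐ x ∂μ01, ‖G x‖ ≤ C) : Integrable (fun x => v x * G x) μ01 := by
  simpa [mul_comm] using hv.bdd_mul hGm hC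

lemma int_mul {v G : ℝ → ℝ} (hv : Integrable v μ01) (hG : Continuous G) :
    Integrable (fun x => v x * G x) μ01 := by
  obtain ⟨C, hC⟩ := bdd_ae hG
  exact int_mul' hv hG.aestronglyMeasurable hC

lemma intG {G : ℝ → ℝ} (hG : Continuous G) : Integrable G μ01 := hG.integrableOn_Icc

lemma intG2 {G : ℝ → ℝ} (hG : Continuous G) : Integrable (fun x => G x ^ 2) μ01 := by
  simpa [pow_two] using int_mul (intG hG) hG

lemma int_of_mem2 {v : ℝ → ℝ} (hv : MemLp v 2 μ01) : Integrable v μ01 :=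
  memLp_one_iff_integrable.mp (hv.mono_exponent (by norm_num))

/-- Jordan decomposition of a measure with (measurable, integrable) real density. -/
lemma jordan_wd {ρ : ℝ → ℝ} (hm : Measurable ρ) (hi : Integrable ρ μ01) :
    (SignedMeasure.toJordanDecomposition (μ01.withDensityᵥ ρ)).posPart
      = μ01.withDensity (fun x => ENNReal.ofReal (ρ x)) ∧
    (SignedMeasure.toJordanDecomposition (μ01.withDensityᵥ ρ)).negPart
      = μ01.withDensity (fun x => ENNReal.ofReal (- ρ x)) := by
  have h := SignedMeasure.toJordanDecomposition_eq_of_eq_add_withDensity (t := 0) hm hi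
      (VectorMeasure.MutuallySingular.zero_left) (by rw [zero_add])
  rw [h]
  constructor <;> simp [SignedMeasure.toJordanDecomposition_zero]

lemma integral_wd {ρ G : ℝ → ℝ} (hm : Measurable ρ) :
    ∫ x, G x ∂(μ01.withDensity (fun x => ENNReal.ofReal (ρ x)))
      = ∫ x, max (ρ x) 0 * G x ∂μ01 := by
  have h : (fun x => ENNReal.ofReal (ρ x)) = fun x => ((Real.toNNReal (ρ x) : ℝ≥0) : ℝ≥0∞) := rfl
  rw [h, integral_withDensity_eq_integral_smul hm.real_toNNReal]
  apply integral_congr_ae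
  filter_upwards with x
  rw [NNReal.smul_def, Real.coe_toNNReal', smul_eq_mul]

lemma wd_diff {ρ G : ℝ → ℝ} (hm : Measurable ρ) (hi : Integrable ρ μ01)
    (hGm : AEStronglyMeasurable G μ01) {C : ℝ} (hC : ∀ᵐ x ∂μ01, ‖G x‖ ≤ C) :
    (∫ x, G x ∂(μ01.withDensity (fun x => ENNReal.ofReal (ρ x))))
      - (∫ x, G x ∂(μ01.withDensity (fun x => ENNReal.ofReal (- ρ x))))
      = ∫ x, ρ x * G x ∂μ01 := by
  have e2 : ∫ x, G x ∂(μ01.withDensity fun x => ENNReal.ofReal (- ρ x))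
      = ∫ x, max (- ρ x) 0 * G x ∂μ01 := integral_wd (ρ := fun x => - ρ x) hm.neg
  have e3 : Integrable (fun x => max (- ρ x) 0) μ01 := by
    have := hi.neg.pos_part
    simpa using this
  rw [integral_wd hm, e2,
    ← integral_sub (int_mul' hi.pos_part hGm hC) (int_mul' e3 hGm hC)]
  apply integral_congr_ae
  filter_upwards with x
  rw [← sub_mul, max_zero_sub_max_neg_zero_eq_self]

lemma sintegral_wd {ρ G : ℝ → ℝ} (hm : Measurable ρ) (hi : Integrable ρ μ01)
    (hGm : AEStronglyMeasurable G μ01) {C : ℝ} (hC : ∀ᵐ x ∂μ01, ‖G x‖ ≤ C) :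
    sintegral (μ01.withDensityᵥ ρ) G = ∫ x, ρ x * G x ∂μ01 := by
  obtain ⟨hp, hn⟩ := jordan_wd hm hi
  rw [sintegral, hp, hn, wd_diff hm hi hGm hC]

lemma sintegral_wd_cont {ρ G : ℝ → ℝ} (hm : Measurable ρ) (hi : Integrable ρ μ01)
    (hG : Continuous G) :
    sintegral (μ01.withDensityᵥ ρ) G = ∫ x, ρ x * G x ∂μ01 := by
  obtain ⟨C, hC⟩ := bdd_ae hG
  exact sintegral_wd hm hi hG.aestronglyMeasurable hC

lemma norm_sq {w : ℝ → ℝ} (hw : MemLp w 2 μ01) :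
    ∫ x, w x ^ 2 ∂μ01 = ((eLpNorm w 2 μ01).toReal) ^ 2 := by
  have h1 : (inner ℝ (hw.toLp w) (hw.toLp w) : ℝ) = ∫ x, w x * w x ∂μ01 := by
    rw [L2.inner_def]
    apply integral_congr_ae
    filter_upwards [hw.coeFn_toLp] with x hx
    rw [hx]
    simp [RCLike.inner_apply, starRingEnd_apply, star_trivial]
    ring
  have h2 : (inner ℝ (hw.toLp w) (hw.toLp w) : ℝ) = ‖hw.toLp w‖ ^ 2 :=
    real_inner_self_eq_norm_sq _
  have h3 : ‖hw.toLp w‖ = (eLpNorm w 2 μ01).toReal := Lp.norm_toLp w hw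
  calc ∫ x, w x ^ 2 ∂μ01 = ∫ x, w x * w x ∂μ01 := by
        apply integral_congr_ae; filter_upwards with x; ring
    _ = ‖hw.toLp w‖ ^ 2 := by rw [← h1, h2]
    _ = ((eLpNorm w 2 μ01).toReal) ^ 2 := by rw [h3]

lemma legVal_eq {f ρ : ℝ → ℝ} (hf : MemLp f 2 μ01) (hm : Measurable ρ) (hρ : MemLp ρ 2 μ01)
    {G : ℝ → ℝ} (hG : Continuous G) :
    legVal f (μ01.withDensityᵥ ρ) G
      = (1/2) * (∫ x, (ρ x - f x) ^ 2 ∂μ01)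
        - (1/2) * (∫ x, (G x - (ρ x - f x)) ^ 2 ∂μ01) := by
  have hρi : Integrable ρ μ01 := int_of_mem2 hρ
  have hfi : Integrable f μ01 := int_of_mem2 hf
  have hhi : Integrable (fun x => ρ x - f x) μ01 := hρi.sub hfi
  have hh2 : MemLp (fun x => ρ x - f x) 2 μ01 := hρ.sub hf
  have hfG : Integrable (fun x => f x * G x) μ01 := int_mul hfi hG
  have hρG : Integrable (fun x => ρ x * G x) μ01 := int_mul hρi hG
  have hhG : Integrable (fun x => (ρ x - f x) * G x) μ01 := int_mul hhi hG
  have hG2 : Integrable (fun x => G x ^ 2) μ01 := intG2 hG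
  have hh2i : Integrable (fun x => (ρ x - f x) ^ 2) μ01 := hh2.integrable_sq
  have e0 : sintegral (μ01.withDensityᵥ ρ) G = ∫ x, ρ x * G x ∂μ01 :=
    sintegral_wd_cont hm hρi hG
  have e1 : ∫ x, (f x * G x + G x ^ 2 / 2) ∂μ01
      = (∫ x, f x * G x ∂μ01) + (∫ x, G x ^ 2 ∂μ01) / 2 := by
    rw [integral_add hfG (hG2.div_const 2), integral_div]
  have e2 : ∫ x, (G x - (ρ x - f x)) ^ 2 ∂μ01
      = (∫ x, G x ^ 2 ∂μ01) - 2 * (∫ x, (ρ x - f x) * G x ∂μ01)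
        + (∫ x, (ρ x - f x) ^ 2 ∂μ01) := by
    have ee : ∫ x, (G x - (ρ x - f x)) ^ 2 ∂μ01
        = ∫ x, (G x ^ 2 - 2 * ((ρ x - f x) * G x) + (ρ x - f x) ^ 2) ∂μ01 := by
      apply integral_congr_ae; filter_upwards with x; ring
    have hsub : Integrable (fun x => G x ^ 2 - 2 * ((ρ x - f x) * G x)) μ01 :=
      hG2.sub (hhG.const_mul 2)
    rw [ee, integral_add hsub hh2i, integral_sub hG2 (hhG.const_mul 2), integral_const_mul]
  have e3 : ∫ x, (ρ x - f x) * G x ∂μ01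
      = (∫ x, ρ x * G x ∂μ01) - ∫ x, f x * G x ∂μ01 := by
    rw [← integral_sub hρG hfG]
    apply integral_congr_ae; filter_upwards with x; ring
  have lv : legVal f (μ01.withDensityᵥ ρ) G
      = (∫ x, ρ x * G x ∂μ01)
        - ((∫ x, f x * G x ∂μ01) + (∫ x, G x ^ 2 ∂μ01) / 2) := by
    rw [legVal, e0, ← e1]
  rw [lv, e2, e3]; ring

lemma part1 {f ρ : ℝ → ℝ} (hf : MemLp f 2 μ01) (hm : Measurable ρ) (hρ : MemLp ρ 2 μ01) :
    IsLUB {r : ℝ | ∃ G : ℝ → ℝ, Continuous G ∧ r = legVal f (μ01.withDensityᵥ ρ) G}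
      ((1/2) * ∫ x, (ρ x - f x) ^ 2 ∂μ01) := by
  constructor
  · rintro r ⟨G, hG, rfl⟩
    rw [legVal_eq hf hm hρ hG]
    have h0 : 0 ≤ ∫ x, (G x - (ρ x - f x)) ^ 2 ∂μ01 :=
      integral_nonneg fun x => sq_nonneg _
    linarith
  · intro b hb
    refine le_of_forall_pos_le_add fun ε hε => ?_
    have hh2 : MemLp (fun x => ρ x - f x) 2 μ01 := hρ.sub hf
    obtain ⟨g, -, hg_near, hg_cont, hg_mem⟩ :=
      hh2.exists_hasCompactSupport_eLpNorm_sub_le (μ := μ01) (p := 2)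
        (by norm_num) (ε := ENNReal.ofReal (Real.sqrt ε))
        (by simpa [ENNReal.ofReal_eq_zero, not_le] using Real.sqrt_pos.mpr hε)
    have hb' : legVal f (μ01.withDensityᵥ ρ) g ≤ b := hb ⟨g, hg_cont, rfl⟩
    rw [legVal_eq hf hm hρ hg_cont] at hb'
    have hw : MemLp (fun x => g x - (ρ x - f x)) 2 μ01 := hg_mem.sub hh2
    have key : ∫ x, (g x - (ρ x - f x)) ^ 2 ∂μ01 ≤ ε := by
      rw [norm_sq hw]
      have h4 : eLpNorm (fun x => g x - (ρ x - f x)) 2 μ01 ≤ ENNReal.ofReal (Real.sqrt ε) := by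
        have := eLpNorm_sub_comm (f := fun x => ρ x - f x) (g := g) (p := (2:ℝ≥0∞)) (μ := μ01)
        calc eLpNorm (fun x => g x - (ρ x - f x)) 2 μ01
            = eLpNorm ((fun x => ρ x - f x) - g) 2 μ01 := by rw [this]; rfl
          _ ≤ ENNReal.ofReal (Real.sqrt ε) := hg_near
      have h5 : (eLpNorm (fun x => g x - (ρ x - f x)) 2 μ01).toReal ≤ Real.sqrt ε :=
        ENNReal.toReal_le_of_le_ofReal (Real.sqrt_nonneg ε) h4
      calc (eLpNorm (fun x => g x - (ρ x - f x)) 2 μ01).toReal ^ 2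
          ≤ Real.sqrt ε ^ 2 := by
            apply pow_le_pow_left₀ ENNReal.toReal_nonneg h5
        _ = ε := Real.sq_sqrt hε.le
    linarith

section Part2

variable (ϱ : SignedMeasure ℝ)

lemma sintegral_smul (G : ℝ → ℝ) (c : ℝ) :
    sintegral ϱ (fun x => c * G x) = c * sintegral ϱ G := by
  rw [sintegral, sintegral, integral_const_mul, integral_const_mul]
  ring

lemma sintegral_add (G H : ℝ →ᵇ ℝ) :
    sintegral ϱ (fun x => G x + H x) = sintegral ϱ ⇑G + sintegral ϱ ⇑H := by
  rw [sintegral, sintegral, sintegral,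
    integral_add (G.integrable _) (H.integrable _),
    integral_add (G.integrable _) (H.integrable _)]
  ring

lemma bcf_memℒp (G : ℝ →ᵇ ℝ) : MemLp (⇑G) 2 μ01 :=
  (memLp_top_of_bound G.continuous.aestronglyMeasurable ‖G‖
    (Eventually.of_forall G.norm_coe_le_norm)).mono_exponent le_top

variable {f : ℝ → ℝ}

lemma legVal_smul (hfi : Integrable f μ01) (G : ℝ →ᵇ ℝ) (c : ℝ) :
    legVal f ϱ (fun x => c * G x)
      = c * (sintegral ϱ ⇑G - ∫ x, f x * G x ∂μ01)
        - c ^ 2 * (∫ x, G x ^ 2 ∂μ01) / 2 := by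
  have e1 : ∫ x in Set.Icc (0:ℝ) 1, (f x * (c * G x) + (c * G x) ^ 2 / 2)
      = c * (∫ x, f x * G x ∂μ01) + (c ^ 2 / 2) * ∫ x, G x ^ 2 ∂μ01 := by
    have ee : ∫ x, (f x * (c * G x) + (c * G x) ^ 2 / 2) ∂μ01
        = ∫ x, (c * (f x * G x) + (c ^ 2 / 2) * G x ^ 2) ∂μ01 := by
      apply integral_congr_ae; filter_upwards with x; ring
    have h1 : Integrable (fun x => c * (f x * G x)) μ01 :=
      (int_mul hfi G.continuous).const_mul c
    have h2 : Integrable (fun x => (c ^ 2 / 2) * G x ^ 2) μ01 :=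
      (intG2 G.continuous).const_mul _
    rw [ee, integral_add h1 h2, integral_const_mul, integral_const_mul]
  rw [legVal, e1, sintegral_smul]
  ring

set_option maxHeartbeats 2000000 in
theorem part2 (hf : MemLp f 2 μ01) {M : ℝ}
    (hB : ∀ G : ℝ → ℝ, Continuous G → legVal f ϱ G ≤ M) :
    ∃ ρ : ℝ → ℝ, MemLp ρ 2 μ01 ∧
      ∀ s : Set ℝ, MeasurableSet s → ϱ s = ∫ u in s ∩ Set.Icc (0:ℝ) 1, ρ u := by
  have hfi : Integrable f μ01 := int_of_mem2 hf
  have hM0 : 0 ≤ M := by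
    have h0 := hB (fun _ => 0) continuous_const
    simpa [legVal, sintegral] using h0
  set E := Lp ℝ 2 μ01 with hE
  set T : (ℝ →ᵇ ℝ) →L[ℝ] E := BoundedContinuousFunction.toLp 2 μ01 ℝ with hT
  set Lv : (ℝ →ᵇ ℝ) → ℝ := fun G => sintegral ϱ ⇑G - ∫ x, f x * G x ∂μ01 with hLv
  -- ‖T G‖ identifications
  have hnorm : ∀ G : ℝ →ᵇ ℝ, ‖T G‖ = (eLpNorm (⇑G) 2 μ01).toReal := by
    intro G
    rw [Lp.norm_def]
    congr 1
    exact eLpNorm_congr_ae (BoundedContinuousFunction.coeFn_toLp 2 μ01 ℝ G)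
  have hQ : ∀ G : ℝ →ᵇ ℝ, ∫ x, G x ^ 2 ∂μ01 = ‖T G‖ ^ 2 := by
    intro G
    rw [norm_sq (bcf_memℒp G), hnorm G]
  -- the key bound
  have key : ∀ G : ℝ →ᵇ ℝ, |Lv G| ≤ Real.sqrt (2 * M) * ‖T G‖ := by
    intro G
    have hQ0 : 0 ≤ ∫ x, G x ^ 2 ∂μ01 := integral_nonneg fun x => sq_nonneg _
    have hleg : ∀ c : ℝ, c * Lv G - c ^ 2 * (∫ x, G x ^ 2 ∂μ01) / 2 ≤ M := by
      intro c
      have h1 := hB (fun x => c * G x) (continuous_const.mul G.continuous)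
      rwa [legVal_smul ϱ hfi G c] at h1
    have hL2 : (Lv G) ^ 2 ≤ 2 * M * (∫ x, G x ^ 2 ∂μ01) := by
      rcases eq_or_lt_of_le hQ0 with hQz | hQp
      · have hL : Lv G = 0 := by
          by_contra hL
          have h1 := hleg ((M + 1) / Lv G)
          rw [← hQz, div_mul_cancel₀ _ hL] at h1
          simp at h1
          linarith
        rw [hL, ← hQz]
        norm_num
      · have h1 := hleg (Lv G / (∫ x, G x ^ 2 ∂μ01))
        have h2 : (Lv G / (∫ x, G x ^ 2 ∂μ01)) * Lv G
            - (Lv G / (∫ x, G x ^ 2 ∂μ01)) ^ 2 * (∫ x, G x ^ 2 ∂μ01) / 2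
            = (Lv G) ^ 2 / (2 * (∫ x, G x ^ 2 ∂μ01)) := by
          field_simp
          ring
        rw [h2] at h1
        rw [div_le_iff₀ (by positivity)] at h1
        linarith
    calc |Lv G| = Real.sqrt ((Lv G) ^ 2) := (Real.sqrt_sq_eq_abs _).symm
      _ ≤ Real.sqrt (2 * M * (∫ x, G x ^ 2 ∂μ01)) := Real.sqrt_le_sqrt hL2
      _ = Real.sqrt (2 * M) * Real.sqrt (∫ x, G x ^ 2 ∂μ01) := Real.sqrt_mul (by linarith) _
      _ = Real.sqrt (2 * M) * ‖T G‖ := by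
          rw [hQ G, Real.sqrt_sq (norm_nonneg _)]
  -- linearity of Lv
  have Lv_add : ∀ G H : ℝ →ᵇ ℝ, Lv (G + H) = Lv G + Lv H := by
    intro G H
    have h1 : sintegral ϱ ⇑(G + H) = sintegral ϱ ⇑G + sintegral ϱ ⇑H := by
      have hco : ⇑(G + H) = fun x => G x + H x := rfl
      rw [hco, sintegral_add]
    have h2 : ∫ x, f x * (G + H) x ∂μ01
        = (∫ x, f x * G x ∂μ01) + ∫ x, f x * H x ∂μ01 := by
      have hco : ∫ x, f x * (G + H) x ∂μ01 = ∫ x, (f x * G x + f x * H x) ∂μ01 := by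
        apply integral_congr_ae; filter_upwards with x
        show f x * (G x + H x) = _
        ring
      rw [hco, integral_add (int_mul hfi G.continuous) (int_mul hfi H.continuous)]
    simp only [hLv, h1, h2]
    ring
  have Lv_smul : ∀ (c : ℝ) (G : ℝ →ᵇ ℝ), Lv (c • G) = c * Lv G := by
    intro c G
    have h1 : sintegral ϱ ⇑(c • G) = c * sintegral ϱ ⇑G := by
      have hco : ⇑(c • G) = fun x => c * G x := rfl
      rw [hco, sintegral_smul]
    have h2 : ∫ x, f x * (c • G) x ∂μ01 = c * ∫ x, f x * G x ∂μ01 := by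
      have hco : ∫ x, f x * (c • G) x ∂μ01 = ∫ x, c * (f x * G x) ∂μ01 := by
        apply integral_congr_ae; filter_upwards with x
        show f x * (c * G x) = _
        ring
      rw [hco, integral_const_mul]
    simp only [hLv, h1, h2]
    ring
  have Lv_sub : ∀ G H : ℝ →ᵇ ℝ, Lv (G - H) = Lv G - Lv H := by
    intro G H
    have h1 : G - H = G + (-1 : ℝ) • H := by
      ext x
      simp [sub_eq_add_neg]
    rw [h1, Lv_add, Lv_smul]
    ring
  -- well-definedness across T
  have W : ∀ G H : ℝ →ᵇ ℝ, T G = T H → Lv G = Lv H := by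
    intro G H hGH
    have h1 : |Lv G - Lv H| ≤ Real.sqrt (2 * M) * ‖T G - T H‖ := by
      rw [← Lv_sub, ← map_sub]
      exact key _
    rw [hGH, sub_self, norm_zero, mul_zero, abs_nonpos_iff, sub_eq_zero] at h1
    exact h1
  -- functional on the range of T
  set p : Submodule ℝ E := LinearMap.range (T : (ℝ →ᵇ ℝ) →ₗ[ℝ] E) with hp
  have hmem : ∀ G : ℝ →ᵇ ℝ, T G ∈ p := fun G => LinearMap.mem_range.mpr ⟨G, rfl⟩
  have hex : ∀ y : p, ∃ G : ℝ →ᵇ ℝ, T G = (y : E) := fun y => LinearMap.mem_range.mp y.2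
  set pre : p → (ℝ →ᵇ ℝ) := fun y => (hex y).choose with hpre_def
  have hpre : ∀ y : p, T (pre y) = (y : E) := fun y => (hex y).choose_spec
  have Wpre : ∀ (y : p) (G : ℝ →ᵇ ℝ), T G = (y : E) → Lv G = Lv (pre y) := by
    intro y G h
    exact W _ _ (h.trans (hpre y).symm)
  set g0 : p →ₗ[ℝ] ℝ :=
    { toFun := fun y => Lv (pre y)
      map_add' := by
        intro y z
        have h1 : T (pre y + pre z) = ((y + z : p) : E) := by
          rw [map_add, hpre, hpre]; rfl
        show Lv (pre (y + z)) = Lv (pre y) + Lv (pre z)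
        rw [← Wpre (y + z) _ h1, Lv_add]
      map_smul' := by
        intro c y
        have h1 : T (c • pre y) = ((c • y : p) : E) := by
          rw [_root_.map_smul, hpre]; rfl
        show Lv (pre (c • y)) = c * Lv (pre y)
        rw [← Wpre (c • y) _ h1, Lv_smul] } with hg0
  have g0bound : ∀ y : p, ‖g0 y‖ ≤ Real.sqrt (2 * M) * ‖y‖ := by
    intro y
    have h1 := key (pre y)
    rw [hpre y] at h1
    simpa [hg0, Real.norm_eq_abs] using h1
  set g0c : p →L[ℝ] ℝ := g0.mkContinuous (Real.sqrt (2 * M)) g0bound with hg0c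
  obtain ⟨Φ, hΦ, -⟩ := exists_extension_norm_eq p g0c
  set hL : E := (InnerProductSpace.toDual ℝ E).symm Φ with hhL
  have hrep : ∀ G : ℝ →ᵇ ℝ, ∫ x, (hL : ℝ → ℝ) x * G x ∂μ01 = Lv G := by
    intro G
    have h1 : (inner ℝ hL (T G) : ℝ) = Φ (T G) := InnerProductSpace.toDual_symm_apply
    have h2 : Φ (T G) = Lv G := by
      have h3 := hΦ ⟨T G, hmem G⟩
      have h4 : g0c ⟨T G, hmem G⟩ = Lv G := (Wpre ⟨T G, hmem G⟩ G rfl).symm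
      exact h3.trans h4
    have h5 : (inner ℝ hL (T G) : ℝ) = ∫ x, (hL : ℝ → ℝ) x * G x ∂μ01 := by
      rw [L2.inner_def]
      apply integral_congr_ae
      filter_upwards [BoundedContinuousFunction.coeFn_toLp 2 μ01 ℝ G] with x hx
      rw [hx]
      simp [RCLike.inner_apply, starRingEnd_apply, star_trivial]
      ring
    rw [← h5, h1, h2]
  -- the density
  set ρ : ℝ → ℝ := fun x => (hL : ℝ → ℝ) x + f x with hρdef
  have hρmem : MemLp ρ 2 μ01 := (Lp.memLp hL).add hf
  have hLi : Integrable (hL : ℝ → ℝ) μ01 := int_of_mem2 (Lp.memLp hL)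
  have hkey : ∀ G : ℝ →ᵇ ℝ, sintegral ϱ ⇑G = ∫ x, ρ x * G x ∂μ01 := by
    intro G
    have h1 := hrep G
    have h2 : ∫ x, ρ x * G x ∂μ01
        = (∫ x, (hL : ℝ → ℝ) x * G x ∂μ01) + ∫ x, f x * G x ∂μ01 := by
      rw [← integral_add (int_mul hLi G.continuous) (int_mul hfi G.continuous)]
      apply integral_congr_ae; filter_upwards with x
      show ((hL : ℝ → ℝ) x + f x) * G x = _
      ring
    rw [h2, h1]
    simp only [hLv]
    ring
  -- measurable representative
  set ρ' : ℝ → ℝ := hρmem.1.mk ρ with hρ'def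
  have hae : ρ =ᵐ[μ01] ρ' := hρmem.1.ae_eq_mk
  have hρ'm : Measurable ρ' := hρmem.1.stronglyMeasurable_mk.measurable
  have hρ'mem : MemLp ρ' 2 μ01 := (memLp_congr_ae hae).mp hρmem
  have hρ'i : Integrable ρ' μ01 := int_of_mem2 hρ'mem
  set νp : Measure ℝ := μ01.withDensity (fun x => ENNReal.ofReal (ρ' x)) with hνp
  set νn : Measure ℝ := μ01.withDensity (fun x => ENNReal.ofReal (- ρ' x)) with hνn
  haveI : IsFiniteMeasure νp := isFiniteMeasure_withDensity_ofReal hρ'i.2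
  haveI : IsFiniteMeasure νn := isFiniteMeasure_withDensity_ofReal hρ'i.neg.2
  have hPQ : ϱ.toJordanDecomposition.posPart + νn = νp + ϱ.toJordanDecomposition.negPart := by
    apply ext_of_forall_lintegral_eq_of_IsFiniteMeasure
    intro f₀
    set G : ℝ →ᵇ ℝ := BoundedContinuousFunction.comp (fun r : ℝ≥0 => (r : ℝ))
      (Isometry.lipschitz (show Isometry ((↑) : ℝ≥0 → ℝ) from fun x y => rfl)) f₀ with hGdef
    have hGe : ∀ x, ((f₀ x : ℝ≥0) : ℝ) = G x := fun x => rfl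
    have conv : ∀ (ν : Measure ℝ), IsFiniteMeasure ν →
        ∫⁻ x, (f₀ x : ℝ≥0∞) ∂ν = ENNReal.ofReal (∫ x, G x ∂ν) := by
      intro ν hν
      have hi : Integrable (fun x => ((f₀ x : ℝ≥0) : ℝ)) ν := G.integrable ν
      rw [lintegral_coe_eq_integral (fun x => f₀ x) hi]
      rfl
    have hGnn : ∀ (ν : Measure ℝ), 0 ≤ ∫ x, G x ∂ν := fun ν =>
      integral_nonneg fun x => by rw [← hGe x]; positivity
    rw [lintegral_add_measure, lintegral_add_measure,
      conv _ inferInstance, conv _ inferInstance, conv _ inferInstance, conv _ inferInstance,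
      ← ENNReal.ofReal_add (hGnn _) (hGnn _), ← ENNReal.ofReal_add (hGnn _) (hGnn _)]
    congr 1
    -- real equality
    have h1 : sintegral ϱ ⇑G = ∫ x, ρ' x * G x ∂μ01 := by
      rw [hkey G]
      apply integral_congr_ae
      filter_upwards [hae] with x hx
      rw [hx]
    obtain ⟨C, hC⟩ := bdd_ae G.continuous
    have h2 : (∫ x, G x ∂νp) - (∫ x, G x ∂νn) = ∫ x, ρ' x * G x ∂μ01 :=
      wd_diff hρ'm hρ'i G.continuous.aestronglyMeasurable hC
    rw [sintegral] at h1
    linarith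
  refine ⟨ρ, hρmem, fun s hs => ?_⟩
  have h1 : ϱ s = (ϱ.toJordanDecomposition.posPart s).toReal
      - (ϱ.toJordanDecomposition.negPart s).toReal := by
    conv_lhs => rw [← ϱ.toSignedMeasure_toJordanDecomposition]
    rw [JordanDecomposition.toSignedMeasure, VectorMeasure.sub_apply,
      Measure.toSignedMeasure_apply_measurable hs,
      Measure.toSignedMeasure_apply_measurable hs]
    rfl
  have h2 : ϱ.toJordanDecomposition.posPart s + νn s
      = νp s + ϱ.toJordanDecomposition.negPart s := by
    have := congrArg (fun m : Measure ℝ => m s) hPQ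
    simpa [Measure.add_apply] using this
  have h2' : (ϱ.toJordanDecomposition.posPart s).toReal + (νn s).toReal
      = (νp s).toReal + (ϱ.toJordanDecomposition.negPart s).toReal := by
    rw [← ENNReal.toReal_add (measure_ne_top _ _) (measure_ne_top _ _),
      ← ENNReal.toReal_add (measure_ne_top _ _) (measure_ne_top _ _), h2]
  have h3 : (νp s).toReal - (νn s).toReal = ∫ x in s, ρ' x ∂μ01 := by
    rw [hνp, hνn, withDensity_apply _ hs, withDensity_apply _ hs,
      integral_eq_lintegral_pos_part_sub_lintegral_neg_part (hρ'i.restrict)]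
  have h4 : ∫ x in s, ρ' x ∂μ01 = ∫ u in s ∩ Set.Icc (0:ℝ) 1, ρ u := by
    have e1 : ∫ x in s, ρ' x ∂μ01 = ∫ x in s, ρ x ∂μ01 :=
      integral_congr_ae (ae_restrict_of_ae hae.symm)
    rw [e1]
    congr 1
    rw [Measure.restrict_restrict hs]
  rw [h1]
  rw [← h4, ← h3]
  linarith

end Part2

end LegAux

open LegAux in
set_option maxHeartbeats 1000000 in
/-- Computation of the Legendre transform of
`G ↦ ∫_0^1 (f G + G²/2)` : it equals `(1/2)∫ (ρ − f)²` on absolutely continuous signed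
measures with `L²` density `ρ`, and is `+∞` (unbounded above) otherwise. -/
theorem legendre_transform_free_energy
    (f : ℝ → ℝ) (hf : MemLp f 2 (volume.restrict (Set.Icc (0:ℝ) 1)))
    (ϱ : SignedMeasure ℝ)
    (hsupp : ∀ s : Set ℝ, MeasurableSet s → s ⊆ (Set.Icc (0:ℝ) 1)ᶜ → ϱ s = 0) :
    (∀ ρ : ℝ → ℝ, MemLp ρ 2 (volume.restrict (Set.Icc (0:ℝ) 1)) →
        (∀ s : Set ℝ, MeasurableSet s → ϱ s = ∫ u in s ∩ Set.Icc (0:ℝ) 1, ρ u) →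
        IsLUB {r : ℝ | ∃ G : ℝ → ℝ, Continuous G ∧ r = legVal f ϱ G}
          ((1/2) * ∫ u in Set.Icc (0:ℝ) 1, (ρ u - f u) ^ 2)) ∧
    ((¬ ∃ ρ : ℝ → ℝ, MemLp ρ 2 (volume.restrict (Set.Icc (0:ℝ) 1)) ∧
        ∀ s : Set ℝ, MeasurableSet s → ϱ s = ∫ u in s ∩ Set.Icc (0:ℝ) 1, ρ u) →
      ∀ M : ℝ, ∃ G : ℝ → ℝ, Continuous G ∧ M < legVal f ϱ G) := by
  constructor
  · intro ρ hρ hs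
    set ρ' : ℝ → ℝ := hρ.1.mk ρ with hρ'def
    have hae : ρ =ᵐ[μ01] ρ' := hρ.1.ae_eq_mk
    have hm : Measurable ρ' := hρ.1.stronglyMeasurable_mk.measurable
    have hρ' : MemLp ρ' 2 μ01 := (memLp_congr_ae hae).mp hρ
    have hint' : Integrable ρ' μ01 := int_of_mem2 hρ'
    have hϱeq : ϱ = μ01.withDensityᵥ ρ' := by
      apply VectorMeasure.ext
      intro s hsm
      rw [withDensityᵥ_apply hint' hsm, hs s hsm]
      have e1 : ∫ x in s, ρ' x ∂μ01 = ∫ x in s, ρ x ∂μ01 :=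
        integral_congr_ae (ae_restrict_of_ae hae.symm)
      rw [e1, Measure.restrict_restrict hsm]
    have e2 : ∫ u in Set.Icc (0:ℝ) 1, (ρ u - f u) ^ 2 = ∫ x, (ρ' x - f x) ^ 2 ∂μ01 := by
      apply integral_congr_ae
      filter_upwards [hae] with x hx
      rw [hx]
    rw [hϱeq, e2]
    exact part1 hf hm hρ'
  · intro hne M
    by_contra hcon
    push_neg at hcon
    exact hne (part2 ϱ hf hcon)
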